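/- arXiv:2205.11885 — 8 statements merged into one kernel-verified Lean document; each statement's English description precedes it below -/
import Mathlib

section
/- For any τ ∈ (0,1) and any optimal solution (α̂, β̂, ε̂⁺, ε̂⁻) of the CQR problem, let n_τ⁺ be the number of indices i with ε̂_i⁺ > 0 and n_τ⁻ the number of indices i with ε̂_i⁻ > 0. Then n_τ⁺/n ≤ 1 − τ and n_τ⁻/n ≤ τ. -/
/-- Feasibility for the convex quantile regression (CQR) linear program. -/
def CQRFeasible (n d : ℕ) (x : Fin n → Fin d → ℝ) (y : Fin n → ℝ)
    (α : Fin n → ℝ) (β : Fin n → Fin d → ℝ) (εp εm : Fin n → ℝ) : Prop :=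
  (∀ i, y i = α i + (∑ j, β i j * x i j) + εp i - εm i) ∧
  (∀ i h, α i + (∑ j, β i j * x i j) ≤ α h + (∑ j, β h j * x i j)) ∧
  (∀ i j, 0 ≤ β i j) ∧
  (∀ i, 0 ≤ εp i) ∧
  (∀ i, 0 ≤ εm i)

/-- Objective of the CQR linear program. -/
def CQRObjective (n : ℕ) (τ : ℝ) (εp εm : Fin n → ℝ) : ℝ :=
  τ * ∑ i, εp i + (1 - τ) * ∑ i, εm i

/-- Optimal solutions of the CQR linear program. -/
def CQROptimal (n d : ℕ) (x : Fin n → Fin d → ℝ) (y : Fin n → ℝ) (τ : ℝ)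
    (α : Fin n → ℝ) (β : Fin n → Fin d → ℝ) (εp εm : Fin n → ℝ) : Prop :=
  CQRFeasible n d x y α β εp εm ∧
  ∀ α' β' εp' εm', CQRFeasible n d x y α' β' εp' εm' →
    CQRObjective n τ εp εm ≤ CQRObjective n τ εp' εm'

lemma sum_ite_card {n : ℕ} (P : Fin n → Prop) [DecidablePred P] (t : ℝ) :
    ∑ i, (if P i then t else 0) = (Finset.univ.filter P).card * t := by
  rw [← Finset.sum_filter, Finset.sum_const, nsmul_eq_mul]

lemma card_filter_neg {n : ℕ} (P : Fin n → Prop) [DecidablePred P] :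
    ((Finset.univ.filter (fun i => ¬ P i)).card : ℝ)
      = (n : ℝ) - (Finset.univ.filter P).card := by
  have h := Finset.card_filter_add_card_filter_not
    (s := (Finset.univ : Finset (Fin n))) (p := P)
  rw [Finset.card_univ, Fintype.card_fin] at h
  have : ((Finset.univ.filter P).card : ℝ) +
      ((Finset.univ.filter (fun i => ¬ P i)).card : ℝ) = n := by
    exact_mod_cast congrArg (Nat.cast : ℕ → ℝ) h
  linarith

/-- The quantile property of CQR: at any optimal solution, the fraction of strictly
positive residuals is at most `1 - τ` and the fraction of strictly negative residuals
is at most `τ`. -/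
theorem cqr_quantile_property
    (n d : ℕ) (x : Fin n → Fin d → ℝ) (y : Fin n → ℝ) (τ : ℝ)
    (hτ : τ ∈ Set.Ioo (0 : ℝ) 1)
    (α : Fin n → ℝ) (β : Fin n → Fin d → ℝ) (εp εm : Fin n → ℝ)
    (hopt : CQROptimal n d x y τ α β εp εm) :
    ((Finset.univ.filter (fun i => 0 < εp i)).card : ℝ) / n ≤ 1 - τ ∧
    ((Finset.univ.filter (fun i => 0 < εm i)).card : ℝ) / n ≤ τ := by
  obtain ⟨hτ0, hτ1⟩ := hτ
  obtain ⟨⟨hy, hconc, hβ, hεp, hεm⟩, hmin⟩ := hopt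
  constructor
  · -- fraction of positive residuals ≤ 1 - τ
    rcases (Finset.univ.filter (fun i => 0 < εp i)).eq_empty_or_nonempty with hSe | hSne
    · rw [hSe]
      simp only [Finset.card_empty, Nat.cast_zero, zero_div]
      linarith
    · have hn : 0 < n := by
        obtain ⟨i, _⟩ := hSne; exact i.pos
      set S := Finset.univ.filter (fun i => 0 < εp i) with hSdef
      set t := S.inf' hSne εp with ht
      have ht0 : 0 < t := by
        rw [ht, Finset.lt_inf'_iff]
        intro i hi
        exact (Finset.mem_filter.mp hi).2
      have htle : ∀ i ∈ S, t ≤ εp i := fun i hi => Finset.inf'_le _ hi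
      set εp' := fun i => εp i - (if 0 < εp i then t else 0) with hεp'
      set εm' := fun i => εm i + (if 0 < εp i then 0 else t) with hεm'
      have hfeas : CQRFeasible n d x y (fun i => α i + t) β εp' εm' := by
        refine ⟨?_, ?_, hβ, ?_, ?_⟩
        · intro i
          by_cases h : 0 < εp i
          · simp only [hεp', hεm', h, if_true]
            rw [hy i]; ring
          · have h0 : εp i = 0 := le_antisymm (not_lt.mp h) (hεp i)
            simp only [hεp', hεm', h, if_false]
            rw [hy i, h0]; ring
        · intro i h
          have := hconc i h
          dsimp only; linarith
        · intro i
          by_cases h : 0 < εp i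
          · have : t ≤ εp i := htle i (Finset.mem_filter.mpr ⟨Finset.mem_univ i, h⟩)
            simp only [hεp', h, if_true]; linarith
          · simp only [hεp', h, if_false]; linarith [hεp i]
        · intro i
          by_cases h : 0 < εp i <;> simp only [hεm', h, if_true, if_false] <;>
            [linarith [hεm i]; linarith [hεm i]]
      have hobj := hmin _ _ _ _ hfeas
      unfold CQRObjective at hobj
      have hsp : ∑ i, εp' i = ∑ i, εp i - (S.card : ℝ) * t := by
        simp only [hεp']
        rw [Finset.sum_sub_distrib, sum_ite_card]
      have hsm : ∑ i, εm' i = ∑ i, εm i + ((n : ℝ) - S.card) * t := by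
        simp only [hεm']
        rw [Finset.sum_add_distrib]
        congr 1
        have : ∑ i, (if 0 < εp i then (0:ℝ) else t)
            = ∑ i, (if ¬ 0 < εp i then (t:ℝ) else 0) := by
          apply Finset.sum_congr rfl
          intro i _
          by_cases h : 0 < εp i <;> simp [h]
        rw [this, sum_ite_card, card_filter_neg]
      rw [hsp, hsm] at hobj
      -- derive τ * c ≤ (1-τ) * (n - c)
      have key : τ * (S.card : ℝ) ≤ (1 - τ) * ((n : ℝ) - S.card) := by
        nlinarith [ht0]
      have hcard : (S.card : ℝ) ≤ (1 - τ) * n := by nlinarith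
      rw [div_le_iff₀ (by exact_mod_cast hn)]
      exact hcard
  · -- fraction of negative residuals ≤ τ
    rcases (Finset.univ.filter (fun i => 0 < εm i)).eq_empty_or_nonempty with hSe | hSne
    · rw [hSe]
      simp only [Finset.card_empty, Nat.cast_zero, zero_div]
      linarith
    · have hn : 0 < n := by
        obtain ⟨i, _⟩ := hSne; exact i.pos
      set S := Finset.univ.filter (fun i => 0 < εm i) with hSdef
      set t := S.inf' hSne εm with ht
      have ht0 : 0 < t := by
        rw [ht, Finset.lt_inf'_iff]
        intro i hi
        exact (Finset.mem_filter.mp hi).2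
      have htle : ∀ i ∈ S, t ≤ εm i := fun i hi => Finset.inf'_le _ hi
      set εp' := fun i => εp i + (if 0 < εm i then 0 else t) with hεp'
      set εm' := fun i => εm i - (if 0 < εm i then t else 0) with hεm'
      have hfeas : CQRFeasible n d x y (fun i => α i - t) β εp' εm' := by
        refine ⟨?_, ?_, hβ, ?_, ?_⟩
        · intro i
          by_cases h : 0 < εm i
          · simp only [hεp', hεm', h, if_true]
            rw [hy i]; ring
          · have h0 : εm i = 0 := le_antisymm (not_lt.mp h) (hεm i)
            simp only [hεp', hεm', h, if_false]
            rw [hy i, h0]; ring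
        · intro i h
          have := hconc i h
          dsimp only; linarith
        · intro i
          by_cases h : 0 < εm i <;> simp only [hεp', h, if_true, if_false] <;>
            [linarith [hεp i]; linarith [hεp i]]
        · intro i
          by_cases h : 0 < εm i
          · have : t ≤ εm i := htle i (Finset.mem_filter.mpr ⟨Finset.mem_univ i, h⟩)
            simp only [hεm', h, if_true]; linarith
          · simp only [hεm', h, if_false]; linarith [hεm i]
      have hobj := hmin _ _ _ _ hfeas
      unfold CQRObjective at hobj
      have hsm : ∑ i, εm' i = ∑ i, εm i - (S.card : ℝ) * t := by
        simp only [hεm']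
        rw [Finset.sum_sub_distrib, sum_ite_card]
      have hsp : ∑ i, εp' i = ∑ i, εp i + ((n : ℝ) - S.card) * t := by
        simp only [hεp']
        rw [Finset.sum_add_distrib]
        congr 1
        have : ∑ i, (if 0 < εm i then (0:ℝ) else t)
            = ∑ i, (if ¬ 0 < εm i then (t:ℝ) else 0) := by
          apply Finset.sum_congr rfl
          intro i _
          by_cases h : 0 < εm i <;> simp [h]
        rw [this, sum_ite_card, card_filter_neg]
      rw [hsp, hsm] at hobj
      have key : (1 - τ) * (S.card : ℝ) ≤ τ * ((n : ℝ) - S.card) := by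
        nlinarith [ht0]
      have hcard : (S.card : ℝ) ≤ τ * n := by nlinarith
      rw [div_le_iff₀ (by exact_mod_cast hn)]
      exact hcard
end

section
/- The optimal fitted values of the CQR problem are not necessarily unique: there exist n ≥ 1, d ≥ 1, data (x_i, y_i), i = 1,…,n, a quantile τ ∈ (0,1), and two optimal solutions (α̂, β̂, ε̂⁺, ε̂⁻) and (α̃, β̃, ε̃⁺, ε̃⁻) of the CQR problem such that the fitted values at some observed data point differ, i.e., α̂_i + β̂_i·x_i ≠ α̃_i + β̃_i·x_i for some index i. -/
lemma cqr_lb (α' : Fin 2 → ℝ) (β' : Fin 2 → Fin 1 → ℝ) (εp' εm' : Fin 2 → ℝ)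
    (h : CQRFeasible 2 1 (fun _ _ => (0:ℝ)) ![0,1] α' β' εp' εm') :
    (1:ℝ)/2 ≤ CQRObjective 2 (1/2) εp' εm' := by
  obtain ⟨h1, h2, _, h4, h5⟩ := h
  have e0 := h1 0
  have e1 := h1 1
  have c01 := h2 0 1
  have c10 := h2 1 0
  simp [Fin.sum_univ_two, Fin.sum_univ_one, Matrix.cons_val_zero, Matrix.cons_val_one] at e0 e1 c01 c10
  have p0 := h4 0; have p1 := h4 1; have m0 := h5 0; have m1 := h5 1
  simp only [CQRObjective, Fin.sum_univ_two]
  linarith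

/-- The optimal fitted values of the CQR problem are not necessarily unique: there are
data, a quantile `τ`, and two optimal solutions whose fitted values differ at some
observed data point. -/
theorem cqr_fitted_values_not_unique :
    ∃ (n d : ℕ) (x : Fin n → Fin d → ℝ) (y : Fin n → ℝ) (τ : ℝ),
      1 ≤ n ∧ 1 ≤ d ∧ τ ∈ Set.Ioo (0 : ℝ) 1 ∧
      ∃ (α : Fin n → ℝ) (β : Fin n → Fin d → ℝ) (εp εm : Fin n → ℝ)
        (α' : Fin n → ℝ) (β' : Fin n → Fin d → ℝ) (εp' εm' : Fin n → ℝ),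
        CQROptimal n d x y τ α β εp εm ∧
        CQROptimal n d x y τ α' β' εp' εm' ∧
        ∃ i : Fin n,
          α i + (∑ j, β i j * x i j) ≠ α' i + (∑ j, β' i j * x i j) := by
  refine ⟨2, 1, fun _ _ => 0, ![0,1], 1/2, by norm_num, by norm_num,
    ⟨by norm_num, by norm_num⟩,
    fun _ => 0, fun _ _ => 0, ![0,1], fun _ => 0,
    fun _ => 1, fun _ _ => 0, fun _ => 0, ![1,0], ?_, ?_, ⟨0, by simp⟩⟩
  · constructor
    · refine ⟨?_, ?_, ?_, ?_, ?_⟩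
      · intro i; fin_cases i <;> simp
      · intro i h; simp
      · intro i j; simp
      · intro i; fin_cases i <;> simp
      · intro i; simp
    · intro α' β' εp' εm' hf
      have := cqr_lb α' β' εp' εm' hf
      have : CQRObjective 2 (1/2) ![0,1] (fun _ => 0) = 1/2 := by
        norm_num [CQRObjective, Fin.sum_univ_two]
      linarith [cqr_lb α' β' εp' εm' hf]
  · constructor
    · refine ⟨?_, ?_, ?_, ?_, ?_⟩
      · intro i; fin_cases i <;> simp
      · intro i h; simp
      · intro i j; simp
      · intro i; simp
      · intro i; fin_cases i <;> simp
    · intro α' β' εp' εm' hf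
      have : CQRObjective 2 (1/2) (fun _ => 0) ![1,0] = 1/2 := by
        norm_num [CQRObjective, Fin.sum_univ_two]
      linarith [cqr_lb α' β' εp' εm' hf]
end

section
/- For any τ̃ ∈ (0,1) and any optimal solution (α̂, β̂, ε̂⁺, ε̂⁻) of the CER problem with Σ_{i=1}^n ε̂_i⁺ + Σ_{i=1}^n ε̂_i⁻ > 0, the expectile identity holds: τ̃ = (Σ_{i=1}^n ε̂_i⁻) / (Σ_{i=1}^n ε̂_i⁺ + Σ_{i=1}^n ε̂_i⁻). -/
/-- Feasibility for the convex expectile regression (CER) quadratic program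
(the constraints coincide with those of CQR). -/
def CERFeasible (n d : ℕ) (x : Fin n → Fin d → ℝ) (y : Fin n → ℝ)
    (α : Fin n → ℝ) (β : Fin n → Fin d → ℝ) (εp εm : Fin n → ℝ) : Prop :=
  (∀ i, y i = α i + (∑ j, β i j * x i j) + εp i - εm i) ∧
  (∀ i h, α i + (∑ j, β i j * x i j) ≤ α h + (∑ j, β h j * x i j)) ∧
  (∀ i j, 0 ≤ β i j) ∧
  (∀ i, 0 ≤ εp i) ∧
  (∀ i, 0 ≤ εm i)

/-- Objective of the CER quadratic program. -/
def CERObjective (n : ℕ) (τ : ℝ) (εp εm : Fin n → ℝ) : ℝ :=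
  τ * ∑ i, (εp i) ^ 2 + (1 - τ) * ∑ i, (εm i) ^ 2

/-- Optimal solutions of the CER quadratic program. -/
def CEROptimal (n d : ℕ) (x : Fin n → Fin d → ℝ) (y : Fin n → ℝ) (τ : ℝ)
    (α : Fin n → ℝ) (β : Fin n → Fin d → ℝ) (εp εm : Fin n → ℝ) : Prop :=
  CERFeasible n d x y α β εp εm ∧
  ∀ α' β' εp' εm', CERFeasible n d x y α' β' εp' εm' →
    CERObjective n τ εp εm ≤ CERObjective n τ εp' εm'

set_option maxHeartbeats 1600000 in
/-- The expectile property of CER: at any optimal solution with a nonzero total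
residual mass, `τ̃` equals the share of the negative residual parts. -/
theorem cer_expectile_property
    (n d : ℕ) (x : Fin n → Fin d → ℝ) (y : Fin n → ℝ) (τ : ℝ)
    (hτ : τ ∈ Set.Ioo (0 : ℝ) 1)
    (α : Fin n → ℝ) (β : Fin n → Fin d → ℝ) (εp εm : Fin n → ℝ)
    (hopt : CEROptimal n d x y τ α β εp εm)
    (hpos : 0 < (∑ i, εp i) + (∑ i, εm i)) :
    τ = (∑ i, εm i) / ((∑ i, εp i) + (∑ i, εm i)) := by
  obtain ⟨⟨heq, hconc, hβ, hεp, hεm⟩, hopt2⟩ := hopt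
  obtain ⟨hτ0, hτ1⟩ := hτ
  have hn : 0 < n := by
    rcases Nat.eq_zero_or_pos n with h | h
    · subst h; simp at hpos
    · exact h
  haveI : Nonempty (Fin n) := Fin.pos_iff_nonempty.mp hn
  -- complementarity
  have hcomp : ∀ i, εp i = 0 ∨ εm i = 0 := by
    intro i
    by_contra hcon
    push_neg at hcon
    have hp : 0 < εp i := (hεp i).lt_of_ne (Ne.symm hcon.1)
    have hm : 0 < εm i := (hεm i).lt_of_ne (Ne.symm hcon.2)
    set c := min (εp i) (εm i) with hc
    have hc0 : 0 < c := lt_min hp hm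
    have hcp : c ≤ εp i := min_le_left _ _
    have hcm : c ≤ εm i := min_le_right _ _
    set εp' := Function.update εp i (εp i - c) with hεp'def
    set εm' := Function.update εm i (εm i - c) with hεm'def
    have hfeas : CERFeasible n d x y α β εp' εm' := by
      refine ⟨?_, hconc, hβ, ?_, ?_⟩
      · intro j
        by_cases hj : j = i
        · subst hj
          simp only [hεp'def, hεm'def, Function.update_self]
          have := heq j; linarith
        · simp only [hεp'def, hεm'def, Function.update_of_ne hj]
          exact heq j
      · intro j
        by_cases hj : j = i
        · subst hj; simp only [hεp'def, Function.update_self]; linarith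
        · simp only [hεp'def, Function.update_of_ne hj]; exact hεp j
      · intro j
        by_cases hj : j = i
        · subst hj; simp only [hεm'def, Function.update_self]; linarith
        · simp only [hεm'def, Function.update_of_ne hj]; exact hεm j
    have hle := hopt2 α β εp' εm' hfeas
    have hsp : ∑ j, (εp' j) ^ 2 = (εp i - c) ^ 2 + ∑ j ∈ Finset.univ.erase i, (εp j) ^ 2 := by
      rw [← Finset.add_sum_erase _ _ (Finset.mem_univ i)]
      congr 1
      · simp [hεp'def]
      · exact Finset.sum_congr rfl fun j hj => by
          rw [hεp'def, Function.update_of_ne (Finset.mem_erase.mp hj).1]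
    have hsm : ∑ j, (εm' j) ^ 2 = (εm i - c) ^ 2 + ∑ j ∈ Finset.univ.erase i, (εm j) ^ 2 := by
      rw [← Finset.add_sum_erase _ _ (Finset.mem_univ i)]
      congr 1
      · simp [hεm'def]
      · exact Finset.sum_congr rfl fun j hj => by
          rw [hεm'def, Function.update_of_ne (Finset.mem_erase.mp hj).1]
    have hsp0 : ∑ j, (εp j) ^ 2 = (εp i) ^ 2 + ∑ j ∈ Finset.univ.erase i, (εp j) ^ 2 :=
      (Finset.add_sum_erase _ _ (Finset.mem_univ i)).symm
    have hsm0 : ∑ j, (εm j) ^ 2 = (εm i) ^ 2 + ∑ j ∈ Finset.univ.erase i, (εm j) ^ 2 :=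
      (Finset.add_sum_erase _ _ (Finset.mem_univ i)).symm
    simp only [CERObjective] at hle
    rw [hsp, hsm, hsp0, hsm0] at hle
    have e1 : (εp i - c) ^ 2 < (εp i) ^ 2 := by nlinarith
    have e2 : (εm i - c) ^ 2 ≤ (εm i) ^ 2 := by nlinarith
    have p1 : τ * (εp i - c) ^ 2 < τ * (εp i) ^ 2 := by
      exact mul_lt_mul_of_pos_left e1 hτ0
    have p2 : (1 - τ) * (εm i - c) ^ 2 ≤ (1 - τ) * (εm i) ^ 2 :=
      mul_le_mul_of_nonneg_left e2 (by linarith)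
    nlinarith [hle]
  -- step size bound
  have hune : (Finset.univ : Finset (Fin n)).Nonempty := Finset.univ_nonempty
  set t0 : ℝ := Finset.univ.inf' hune
      (fun i => min (if 0 < εp i then εp i else 1) (if 0 < εm i then εm i else 1)) with ht0def
  have ht0pos : 0 < t0 := by
    rw [ht0def, Finset.lt_inf'_iff]
    intro i _
    refine lt_min ?_ ?_ <;> split_ifs <;> first | assumption | norm_num
  have ht0p : ∀ i, 0 < εp i → t0 ≤ εp i := by
    intro i hi
    have h1 := Finset.inf'_le (f := fun i => min (if 0 < εp i then εp i else 1)
      (if 0 < εm i then εm i else 1)) (Finset.mem_univ i)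
    rw [← ht0def] at h1
    have h2 := h1.trans (min_le_left _ _)
    rwa [if_pos hi] at h2
  have ht0m : ∀ i, 0 < εm i → t0 ≤ εm i := by
    intro i hi
    have h1 := Finset.inf'_le (f := fun i => min (if 0 < εp i then εp i else 1)
      (if 0 < εm i then εm i else 1)) (Finset.mem_univ i)
    rw [← ht0def] at h1
    have h2 := h1.trans (min_le_right _ _)
    rwa [if_pos hi] at h2
  clear_value t0
  -- key inequality A : shifting the frontier up by t
  have keyA : ∀ t : ℝ, 0 < t → t ≤ t0 →
      0 ≤ 2 * t * ((1 - τ) * (∑ i, εm i) - τ * (∑ i, εp i)) + t ^ 2 * n := by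
    intro t ht ht'
    set εp' : Fin n → ℝ := fun i => if 0 < εp i then εp i - t else 0 with hεp'def
    set εm' : Fin n → ℝ := fun i => if 0 < εp i then εm i else εm i + t with hεm'def
    have hfeas : CERFeasible n d x y (fun i => α i + t) β εp' εm' := by
      refine ⟨?_, ?_, hβ, ?_, ?_⟩
      · intro i
        by_cases hi : 0 < εp i
        · simp only [hεp'def, hεm'def, if_pos hi]
          have := heq i; linarith
        · have hz : εp i = 0 := le_antisymm (not_lt.mp hi) (hεp i)
          simp only [hεp'def, hεm'def, if_neg hi]
          have := heq i; rw [hz] at this; linarith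
      · intro i h; have := hconc i h; simp only []; linarith
      · intro i
        by_cases hi : 0 < εp i
        · simp only [hεp'def, if_pos hi]; have := ht0p i hi; linarith
        · simp only [hεp'def, if_neg hi]; exact le_refl 0
      · intro i
        by_cases hi : 0 < εp i
        · simp only [hεm'def, if_pos hi]; exact hεm i
        · simp only [hεm'def, if_neg hi]; have := hεm i; linarith
    have hle := hopt2 _ _ _ _ hfeas
    have hsp : ∑ i, (εp' i) ^ 2
        = (∑ i, (εp i) ^ 2) - 2 * t * (∑ i, εp i) + (∑ i, (if 0 < εp i then t ^ 2 else 0)) := by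
      rw [Finset.mul_sum, ← Finset.sum_sub_distrib, ← Finset.sum_add_distrib]
      refine Finset.sum_congr rfl fun i _ => ?_
      by_cases hi : 0 < εp i
      · simp only [hεp'def, if_pos hi]; ring
      · have hz : εp i = 0 := le_antisymm (not_lt.mp hi) (hεp i)
        simp only [hεp'def, if_neg hi, hz]; norm_num
    have hsm : ∑ i, (εm' i) ^ 2
        = (∑ i, (εm i) ^ 2) + 2 * t * (∑ i, εm i) + (∑ i, (if 0 < εp i then 0 else t ^ 2)) := by
      rw [Finset.mul_sum, ← Finset.sum_add_distrib, ← Finset.sum_add_distrib]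
      refine Finset.sum_congr rfl fun i _ => ?_
      by_cases hi : 0 < εp i
      · have hz : εm i = 0 := (hcomp i).resolve_left hi.ne'
        simp only [hεm'def, if_pos hi, hz]; ring
      · simp only [hεm'def, if_neg hi]; ring
    have hA0 : 0 ≤ ∑ i, (if 0 < εp i then t ^ 2 else 0) :=
      Finset.sum_nonneg fun i _ => by split_ifs <;> positivity
    have hB0 : 0 ≤ ∑ i, (if 0 < εp i then 0 else t ^ 2) :=
      Finset.sum_nonneg fun i _ => by split_ifs <;> positivity
    have hAb : (∑ i, (if 0 < εp i then t ^ 2 else 0)) ≤ n * t ^ 2 := by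
      calc (∑ i, (if 0 < εp i then t ^ 2 else 0)) ≤ ∑ _i : Fin n, t ^ 2 :=
            Finset.sum_le_sum fun i _ => by split_ifs <;> first | exact le_rfl | positivity
        _ = n * t ^ 2 := by
            rw [Finset.sum_const, Finset.card_univ, Fintype.card_fin, nsmul_eq_mul]
    have hBb : (∑ i, (if 0 < εp i then 0 else t ^ 2)) ≤ n * t ^ 2 := by
      calc (∑ i, (if 0 < εp i then 0 else t ^ 2)) ≤ ∑ _i : Fin n, t ^ 2 :=
            Finset.sum_le_sum fun i _ => by split_ifs <;> first | exact le_rfl | positivity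
        _ = n * t ^ 2 := by
            rw [Finset.sum_const, Finset.card_univ, Fintype.card_fin, nsmul_eq_mul]
    simp only [CERObjective] at hle
    rw [hsp, hsm] at hle
    nlinarith [mul_le_mul_of_nonneg_left hAb hτ0.le,
      mul_le_mul_of_nonneg_left hBb (by linarith : (0:ℝ) ≤ 1 - τ),
      mul_nonneg hτ0.le hA0, mul_nonneg (by linarith : (0:ℝ) ≤ 1 - τ) hB0]
  -- key inequality B : shifting the frontier down by t
  have keyB : ∀ t : ℝ, 0 < t → t ≤ t0 →
      0 ≤ 2 * t * (τ * (∑ i, εp i) - (1 - τ) * (∑ i, εm i)) + t ^ 2 * n := by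
    intro t ht ht'
    set εm' : Fin n → ℝ := fun i => if 0 < εm i then εm i - t else 0 with hεm'def
    set εp' : Fin n → ℝ := fun i => if 0 < εm i then εp i else εp i + t with hεp'def
    have hfeas : CERFeasible n d x y (fun i => α i - t) β εp' εm' := by
      refine ⟨?_, ?_, hβ, ?_, ?_⟩
      · intro i
        by_cases hi : 0 < εm i
        · simp only [hεp'def, hεm'def, if_pos hi]
          have := heq i; linarith
        · have hz : εm i = 0 := le_antisymm (not_lt.mp hi) (hεm i)
          simp only [hεp'def, hεm'def, if_neg hi]
          have := heq i; rw [hz] at this; linarith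
      · intro i h; have := hconc i h; simp only []; linarith
      · intro i
        by_cases hi : 0 < εm i
        · simp only [hεp'def, if_pos hi]; exact hεp i
        · simp only [hεp'def, if_neg hi]; have := hεp i; linarith
      · intro i
        by_cases hi : 0 < εm i
        · simp only [hεm'def, if_pos hi]; have := ht0m i hi; linarith
        · simp only [hεm'def, if_neg hi]; exact le_refl 0
    have hle := hopt2 _ _ _ _ hfeas
    have hsm : ∑ i, (εm' i) ^ 2
        = (∑ i, (εm i) ^ 2) - 2 * t * (∑ i, εm i) + (∑ i, (if 0 < εm i then t ^ 2 else 0)) := by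
      rw [Finset.mul_sum, ← Finset.sum_sub_distrib, ← Finset.sum_add_distrib]
      refine Finset.sum_congr rfl fun i _ => ?_
      by_cases hi : 0 < εm i
      · simp only [hεm'def, if_pos hi]; ring
      · have hz : εm i = 0 := le_antisymm (not_lt.mp hi) (hεm i)
        simp only [hεm'def, if_neg hi, hz]; norm_num
    have hsp : ∑ i, (εp' i) ^ 2
        = (∑ i, (εp i) ^ 2) + 2 * t * (∑ i, εp i) + (∑ i, (if 0 < εm i then 0 else t ^ 2)) := by
      rw [Finset.mul_sum, ← Finset.sum_add_distrib, ← Finset.sum_add_distrib]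
      refine Finset.sum_congr rfl fun i _ => ?_
      by_cases hi : 0 < εm i
      · have hz : εp i = 0 := (hcomp i).resolve_right hi.ne'
        simp only [hεp'def, if_pos hi, hz]; ring
      · simp only [hεp'def, if_neg hi]; ring
    have hA0 : 0 ≤ ∑ i, (if 0 < εm i then t ^ 2 else 0) :=
      Finset.sum_nonneg fun i _ => by split_ifs <;> positivity
    have hB0 : 0 ≤ ∑ i, (if 0 < εm i then 0 else t ^ 2) :=
      Finset.sum_nonneg fun i _ => by split_ifs <;> positivity
    have hAb : (∑ i, (if 0 < εm i then t ^ 2 else 0)) ≤ n * t ^ 2 := by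
      calc (∑ i, (if 0 < εm i then t ^ 2 else 0)) ≤ ∑ _i : Fin n, t ^ 2 :=
            Finset.sum_le_sum fun i _ => by split_ifs <;> first | exact le_rfl | positivity
        _ = n * t ^ 2 := by
            rw [Finset.sum_const, Finset.card_univ, Fintype.card_fin, nsmul_eq_mul]
    have hBb : (∑ i, (if 0 < εm i then 0 else t ^ 2)) ≤ n * t ^ 2 := by
      calc (∑ i, (if 0 < εm i then 0 else t ^ 2)) ≤ ∑ _i : Fin n, t ^ 2 :=
            Finset.sum_le_sum fun i _ => by split_ifs <;> first | exact le_rfl | positivity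
        _ = n * t ^ 2 := by
            rw [Finset.sum_const, Finset.card_univ, Fintype.card_fin, nsmul_eq_mul]
    simp only [CERObjective] at hle
    rw [hsp, hsm] at hle
    nlinarith [mul_le_mul_of_nonneg_left hBb hτ0.le,
      mul_le_mul_of_nonneg_left hAb (by linarith : (0:ℝ) ≤ 1 - τ),
      mul_nonneg hτ0.le hB0, mul_nonneg (by linarith : (0:ℝ) ≤ 1 - τ) hA0]
  -- first order condition
  have hnpos : (0:ℝ) < n := Nat.cast_pos.mpr hn
  have aux : ∀ E : ℝ, (∀ t : ℝ, 0 < t → t ≤ t0 → 0 ≤ 2 * t * (-E) + t ^ 2 * n) → E ≤ 0 := by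
    intro E hE
    by_contra hEpos
    push_neg at hEpos
    set t := min t0 (E / n) with htdef
    have htpos : 0 < t := lt_min ht0pos (div_pos hEpos hnpos)
    have htle : t ≤ t0 := min_le_left _ _
    have htr : t ≤ E / n := min_le_right _ _
    clear_value t
    have h := hE t htpos htle
    have h2 : t * n ≤ E := by
      calc t * n ≤ (E / n) * n := by nlinarith
        _ = E := by field_simp
    nlinarith [mul_le_mul_of_nonneg_left h2 htpos.le, mul_pos htpos hEpos]
  have h1 : τ * (∑ i, εp i) - (1 - τ) * (∑ i, εm i) ≤ 0 := by
    refine aux _ fun t ht ht' => ?_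
    have := keyA t ht ht'
    linarith
  have h2 : (1 - τ) * (∑ i, εm i) - τ * (∑ i, εp i) ≤ 0 := by
    refine aux _ fun t ht ht' => ?_
    have := keyB t ht ht'
    linarith
  have hkey : τ * (∑ i, εp i) = (1 - τ) * (∑ i, εm i) := by linarith
  rw [eq_div_iff (ne_of_gt hpos)]
  linear_combination hkey
end

section
/- For any τ ∈ (0,1), any binary matrix p ∈ {0,1}^{n×n}, and any optimal solution (α̂, β̂, ε̂⁺, ε̂⁻) of the isotonic CQR problem, let n_τ⁺ be the number of indices i with ε̂_i⁺ > 0 and n_τ⁻ the number of indices i with ε̂_i⁻ > 0. Then n_τ⁺/n ≤ 1 − τ and n_τ⁻/n ≤ τ; that is, the quantile property of CQR is retained by isotonic CQR. -/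
/-- Feasibility for the isotonic convex quantile regression (isotonic CQR) linear
program, with a binary matrix `p` switching the Afriat-type constraints on and off. -/
def IsoCQRFeasible (n d : ℕ) (x : Fin n → Fin d → ℝ) (y : Fin n → ℝ)
    (p : Fin n → Fin n → ℝ)
    (α : Fin n → ℝ) (β : Fin n → Fin d → ℝ) (εp εm : Fin n → ℝ) : Prop :=
  (∀ i, y i = α i + (∑ j, β i j * x i j) + εp i - εm i) ∧
  (∀ i h, p i h * (α i + (∑ j, β i j * x i j)) ≤ p i h * (α h + (∑ j, β h j * x i j))) ∧
  (∀ i j, 0 ≤ β i j) ∧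
  (∀ i, 0 ≤ εp i) ∧
  (∀ i, 0 ≤ εm i)

/-- Objective of the isotonic CQR linear program. -/
def IsoCQRObjective (n : ℕ) (τ : ℝ) (εp εm : Fin n → ℝ) : ℝ :=
  τ * ∑ i, εp i + (1 - τ) * ∑ i, εm i

/-- Optimal solutions of the isotonic CQR linear program. -/
def IsoCQROptimal (n d : ℕ) (x : Fin n → Fin d → ℝ) (y : Fin n → ℝ)
    (p : Fin n → Fin n → ℝ) (τ : ℝ)
    (α : Fin n → ℝ) (β : Fin n → Fin d → ℝ) (εp εm : Fin n → ℝ) : Prop :=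
  IsoCQRFeasible n d x y p α β εp εm ∧
  ∀ α' β' εp' εm', IsoCQRFeasible n d x y p α' β' εp' εm' →
    IsoCQRObjective n τ εp εm ≤ IsoCQRObjective n τ εp' εm'

/-- The quantile property of CQR is retained by isotonic CQR: at any optimal solution,
the fraction of strictly positive residuals is at most `1 - τ` and the fraction of
strictly negative residuals is at most `τ`. -/
theorem isotonic_cqr_quantile_property
    (n d : ℕ) (x : Fin n → Fin d → ℝ) (y : Fin n → ℝ) (τ : ℝ)
    (hτ : τ ∈ Set.Ioo (0 : ℝ) 1)
    (p : Fin n → Fin n → ℝ) (hp : ∀ i h, p i h = 0 ∨ p i h = 1)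
    (α : Fin n → ℝ) (β : Fin n → Fin d → ℝ) (εp εm : Fin n → ℝ)
    (hopt : IsoCQROptimal n d x y p τ α β εp εm) :
    ((Finset.univ.filter (fun i => 0 < εp i)).card : ℝ) / n ≤ 1 - τ ∧
    ((Finset.univ.filter (fun i => 0 < εm i)).card : ℝ) / n ≤ τ := by
  obtain ⟨⟨hy, hmono, hβ, hεp, hεm⟩, hopt⟩ := hopt
  have hτ0 := hτ.1
  have hτ1 := hτ.2
  constructor
  · rcases (Finset.univ.filter (fun i => 0 < εp i)).eq_empty_or_nonempty with hS | hS
    · rw [hS]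
      simp only [Finset.card_empty, Nat.cast_zero, zero_div]
      linarith
    · set S := Finset.univ.filter (fun i => 0 < εp i) with hSdef
      have hScard_pos : 0 < S.card := Finset.card_pos.mpr hS
      have hcard_le : S.card ≤ n := by
        simpa using Finset.card_filter_le Finset.univ (fun i => 0 < εp i)
      have hn : 0 < (n : ℝ) := by exact_mod_cast lt_of_lt_of_le hScard_pos hcard_le
      set t := S.inf' hS εp with htdef
      have ht_pos : 0 < t := by
        rw [htdef, Finset.lt_inf'_iff]
        intro i hi
        exact (Finset.mem_filter.mp hi).2
      have ht_le : ∀ i, 0 < εp i → t ≤ εp i := fun i hi =>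
        Finset.inf'_le εp (Finset.mem_filter.mpr ⟨Finset.mem_univ i, hi⟩)
      have hεp0 : ∀ i, ¬ 0 < εp i → εp i = 0 := fun i h => le_antisymm (not_lt.mp h) (hεp i)
      have hfeas : IsoCQRFeasible n d x y p (fun i => α i + t) β
          (fun i => if 0 < εp i then εp i - t else 0)
          (fun i => if 0 < εp i then εm i else εm i + t) := by
        refine ⟨?_, ?_, hβ, ?_, ?_⟩
        · intro i
          dsimp only
          have h1 := hy i
          by_cases h : 0 < εp i
          · simp only [h, if_true]
            linarith
          · simp only [h, if_false]
            have h0 := hεp0 i h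
            linarith
        · intro i h
          dsimp only
          have h1 := hmono i h
          have e1 : p i h * (α i + t + ∑ j, β i j * x i j)
              = p i h * (α i + ∑ j, β i j * x i j) + p i h * t := by ring
          have e2 : p i h * (α h + t + ∑ j, β h j * x i j)
              = p i h * (α h + ∑ j, β h j * x i j) + p i h * t := by ring
          linarith
        · intro i
          dsimp only
          by_cases h : 0 < εp i
          · simp only [h, if_true]
            linarith [ht_le i h]
          · simp only [h, if_false]
            exact le_refl 0
        · intro i
          dsimp only
          by_cases h : 0 < εp i
          · simp only [h, if_true]
            exact hεm i
          · simp only [h, if_false]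
            linarith [hεm i]
      have hobj := hopt _ _ _ _ hfeas
      have s1 : (∑ i, (if 0 < εp i then εp i - t else 0))
          = (∑ i, εp i) - (S.card : ℝ) * t := by
        have e : ∀ i ∈ Finset.univ, (if 0 < εp i then εp i - t else 0)
            = εp i - (if 0 < εp i then t else 0) := by
          intro i _
          by_cases h : 0 < εp i
          · simp [h]
          · simp [h, hεp0 i h]
        rw [Finset.sum_congr rfl e, Finset.sum_sub_distrib, ← Finset.sum_filter,
          Finset.sum_const, nsmul_eq_mul]
      have s2 : (∑ i, (if 0 < εp i then εm i else εm i + t))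
          = (∑ i, εm i) + ((n : ℝ) - S.card) * t := by
        have e : ∀ i ∈ Finset.univ, (if 0 < εp i then εm i else εm i + t)
            = εm i + (if ¬ 0 < εp i then t else 0) := by
          intro i _
          by_cases h : 0 < εp i
          · simp [h]
          · simp [h]
        rw [Finset.sum_congr rfl e, Finset.sum_add_distrib, ← Finset.sum_filter,
          Finset.sum_const, nsmul_eq_mul]
        have hc : ((Finset.univ.filter (fun i => ¬ 0 < εp i)).card : ℝ)
            = (n : ℝ) - S.card := by
          have h := Finset.card_filter_add_card_filter_not
            (s := (Finset.univ : Finset (Fin n))) (p := fun i => 0 < εp i)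
          have h2 : S.card + (Finset.univ.filter (fun i => ¬ 0 < εp i)).card = n := by
            simpa using h
          have := congrArg (fun k : ℕ => (k : ℝ)) h2
          push_cast at this
          linarith
        rw [hc]
      unfold IsoCQRObjective at hobj
      rw [s1, s2] at hobj
      have hkey : τ * (S.card : ℝ) * t ≤ (1 - τ) * ((n : ℝ) - S.card) * t := by
        nlinarith [hobj]
      have hfin : (S.card : ℝ) ≤ (1 - τ) * n := by nlinarith [ht_pos]
      rw [div_le_iff₀ hn]
      linarith
  · rcases (Finset.univ.filter (fun i => 0 < εm i)).eq_empty_or_nonempty with hS | hS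
    · rw [hS]
      simp only [Finset.card_empty, Nat.cast_zero, zero_div]
      linarith
    · set S := Finset.univ.filter (fun i => 0 < εm i) with hSdef
      have hScard_pos : 0 < S.card := Finset.card_pos.mpr hS
      have hcard_le : S.card ≤ n := by
        simpa using Finset.card_filter_le Finset.univ (fun i => 0 < εm i)
      have hn : 0 < (n : ℝ) := by exact_mod_cast lt_of_lt_of_le hScard_pos hcard_le
      set t := S.inf' hS εm with htdef
      have ht_pos : 0 < t := by
        rw [htdef, Finset.lt_inf'_iff]
        intro i hi
        exact (Finset.mem_filter.mp hi).2
      have ht_le : ∀ i, 0 < εm i → t ≤ εm i := fun i hi =>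
        Finset.inf'_le εm (Finset.mem_filter.mpr ⟨Finset.mem_univ i, hi⟩)
      have hεm0 : ∀ i, ¬ 0 < εm i → εm i = 0 := fun i h => le_antisymm (not_lt.mp h) (hεm i)
      have hfeas : IsoCQRFeasible n d x y p (fun i => α i - t) β
          (fun i => if 0 < εm i then εp i else εp i + t)
          (fun i => if 0 < εm i then εm i - t else 0) := by
        refine ⟨?_, ?_, hβ, ?_, ?_⟩
        · intro i
          dsimp only
          have h1 := hy i
          by_cases h : 0 < εm i
          · simp only [h, if_true]
            linarith
          · simp only [h, if_false]
            have h0 := hεm0 i h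
            linarith
        · intro i h
          dsimp only
          have h1 := hmono i h
          have e1 : p i h * (α i - t + ∑ j, β i j * x i j)
              = p i h * (α i + ∑ j, β i j * x i j) - p i h * t := by ring
          have e2 : p i h * (α h - t + ∑ j, β h j * x i j)
              = p i h * (α h + ∑ j, β h j * x i j) - p i h * t := by ring
          linarith
        · intro i
          dsimp only
          by_cases h : 0 < εm i
          · simp only [h, if_true]
            exact hεp i
          · simp only [h, if_false]
            linarith [hεp i]
        · intro i
          dsimp only
          by_cases h : 0 < εm i
          · simp only [h, if_true]
            linarith [ht_le i h]
          · simp only [h, if_false]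
            exact le_refl 0
      have hobj := hopt _ _ _ _ hfeas
      have s1 : (∑ i, (if 0 < εm i then εm i - t else 0))
          = (∑ i, εm i) - (S.card : ℝ) * t := by
        have e : ∀ i ∈ Finset.univ, (if 0 < εm i then εm i - t else 0)
            = εm i - (if 0 < εm i then t else 0) := by
          intro i _
          by_cases h : 0 < εm i
          · simp [h]
          · simp [h, hεm0 i h]
        rw [Finset.sum_congr rfl e, Finset.sum_sub_distrib, ← Finset.sum_filter,
          Finset.sum_const, nsmul_eq_mul]
      have s2 : (∑ i, (if 0 < εm i then εp i else εp i + t))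
          = (∑ i, εp i) + ((n : ℝ) - S.card) * t := by
        have e : ∀ i ∈ Finset.univ, (if 0 < εm i then εp i else εp i + t)
            = εp i + (if ¬ 0 < εm i then t else 0) := by
          intro i _
          by_cases h : 0 < εm i
          · simp [h]
          · simp [h]
        rw [Finset.sum_congr rfl e, Finset.sum_add_distrib, ← Finset.sum_filter,
          Finset.sum_const, nsmul_eq_mul]
        have hc : ((Finset.univ.filter (fun i => ¬ 0 < εm i)).card : ℝ)
            = (n : ℝ) - S.card := by
          have h := Finset.card_filter_add_card_filter_not
            (s := (Finset.univ : Finset (Fin n))) (p := fun i => 0 < εm i)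
          have h2 : S.card + (Finset.univ.filter (fun i => ¬ 0 < εm i)).card = n := by
            simpa using h
          have := congrArg (fun k : ℕ => (k : ℝ)) h2
          push_cast at this
          linarith
        rw [hc]
      unfold IsoCQRObjective at hobj
      rw [s1, s2] at hobj
      have hkey : (1 - τ) * (S.card : ℝ) * t ≤ τ * ((n : ℝ) - S.card) * t := by
        nlinarith [hobj]
      have hfin : (S.card : ℝ) ≤ τ * n := by nlinarith [ht_pos]
      rw [div_le_iff₀ hn]
      linarith
end

section
/- For any τ̃ ∈ (0,1), any binary matrix p ∈ {0,1}^{n×n}, and any optimal solution (α̂, β̂, ε̂⁺, ε̂⁻) of the isotonic CER problem with Σ_{i=1}^n ε̂_i⁺ + Σ_{i=1}^n ε̂_i⁻ > 0, the expectile identity τ̃ = (Σ_{i=1}^n ε̂_i⁻) / (Σ_{i=1}^n ε̂_i⁺ + Σ_{i=1}^n ε̂_i⁻) holds; that is, the expectile property of CER is retained by isotonic CER. -/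
lemma max_sub_max' (a : ℝ) : max a 0 - max (-a) 0 = a := by
  rcases le_total a 0 with h | h
  · rw [max_eq_right h, max_eq_left (neg_nonneg.2 h)]; ring
  · rw [max_eq_left h, max_eq_right (neg_nonpos.2 h)]; ring

lemma step_ineq (τ t a : ℝ) (hτ0 : 0 ≤ τ) (hτ1 : τ ≤ 1) :
    τ * (max (a - t) 0)^2 + (1-τ) * (max (t - a) 0)^2 ≤
    τ * (max a 0)^2 + (1-τ) * (max (-a) 0)^2
      - t * (2*τ* max a 0 - 2*(1-τ) * max (-a) 0) + t^2 := by
  rcases le_total a 0 with h | h <;> rcases le_total a t with h2 | h2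
  · rw [max_eq_right h, max_eq_left (neg_nonneg.2 h),
      max_eq_right (by linarith : a - t ≤ 0), max_eq_left (by linarith : (0:ℝ) ≤ t - a)]
    nlinarith [sq_nonneg t]
  · rw [max_eq_right h, max_eq_left (neg_nonneg.2 h),
      max_eq_left (by linarith : (0:ℝ) ≤ a - t), max_eq_right (by linarith : t - a ≤ 0)]
    have hx : (a - t)^2 ≤ t^2 := by
      nlinarith [mul_nonneg (by linarith : (0:ℝ) ≤ -a) (by linarith : (0:ℝ) ≤ a - 2*t)]
    nlinarith [mul_nonneg hτ0 (by linarith : (0:ℝ) ≤ t^2 - (a-t)^2),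
      mul_nonneg (by linarith : (0:ℝ) ≤ 1 - τ) (sq_nonneg (a - t))]
  · rw [max_eq_left h, max_eq_right (neg_nonpos.2 h),
      max_eq_right (by linarith : a - t ≤ 0), max_eq_left (by linarith : (0:ℝ) ≤ t - a)]
    have hx : (t - a)^2 ≤ t^2 := by
      nlinarith [mul_nonneg (by linarith : (0:ℝ) ≤ a) (by linarith : (0:ℝ) ≤ 2*t - a)]
    nlinarith [mul_nonneg (by linarith : (0:ℝ) ≤ 1 - τ) (by linarith : (0:ℝ) ≤ t^2 - (t-a)^2),
      mul_nonneg hτ0 (sq_nonneg (t - a))]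
  · rw [max_eq_left h, max_eq_right (neg_nonpos.2 h),
      max_eq_left (by linarith : (0:ℝ) ≤ a - t), max_eq_right (by linarith : t - a ≤ 0)]
    nlinarith [sq_nonneg t]

lemma quad_coeff_zero (c D : ℝ) (hc : 0 < c) (h : ∀ t : ℝ, t * D ≤ c * t^2) : D = 0 := by
  by_contra hD
  have h1 := h (D / (2*c))
  have h3 : D/(2*c) * D = D^2/(2*c) := by
    field_simp
  have h4 : c * (D/(2*c))^2 = D^2/(4*c) := by
    field_simp
    ring
  rw [h3, h4] at h1
  have h5 : 0 < D^2 := lt_of_le_of_ne (sq_nonneg D) (Ne.symm (pow_ne_zero 2 hD))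
  rw [div_le_div_iff₀ (by linarith) (by linarith)] at h1
  nlinarith [h5, hc]

/-- Feasibility for the isotonic convex expectile regression (isotonic CER) quadratic
program, with a binary matrix `p` switching the Afriat-type constraints on and off. -/
def IsoCERFeasible (n d : ℕ) (x : Fin n → Fin d → ℝ) (y : Fin n → ℝ)
    (p : Fin n → Fin n → ℝ)
    (α : Fin n → ℝ) (β : Fin n → Fin d → ℝ) (εp εm : Fin n → ℝ) : Prop :=
  (∀ i, y i = α i + (∑ j, β i j * x i j) + εp i - εm i) ∧
  (∀ i h, p i h * (α i + (∑ j, β i j * x i j)) ≤ p i h * (α h + (∑ j, β h j * x i j))) ∧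
  (∀ i j, 0 ≤ β i j) ∧
  (∀ i, 0 ≤ εp i) ∧
  (∀ i, 0 ≤ εm i)

/-- Objective of the isotonic CER quadratic program. -/
def IsoCERObjective (n : ℕ) (τ : ℝ) (εp εm : Fin n → ℝ) : ℝ :=
  τ * ∑ i, (εp i) ^ 2 + (1 - τ) * ∑ i, (εm i) ^ 2

/-- Optimal solutions of the isotonic CER quadratic program. -/
def IsoCEROptimal (n d : ℕ) (x : Fin n → Fin d → ℝ) (y : Fin n → ℝ)
    (p : Fin n → Fin n → ℝ) (τ : ℝ)
    (α : Fin n → ℝ) (β : Fin n → Fin d → ℝ) (εp εm : Fin n → ℝ) : Prop :=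
  IsoCERFeasible n d x y p α β εp εm ∧
  ∀ α' β' εp' εm', IsoCERFeasible n d x y p α' β' εp' εm' →
    IsoCERObjective n τ εp εm ≤ IsoCERObjective n τ εp' εm'

/-- The expectile property of CER is retained by isotonic CER: at any optimal solution
with a nonzero total residual mass, `τ̃` equals the share of the negative residual
parts. -/
theorem isotonic_cer_expectile_property
    (n d : ℕ) (x : Fin n → Fin d → ℝ) (y : Fin n → ℝ) (τ : ℝ)
    (hτ : τ ∈ Set.Ioo (0 : ℝ) 1)
    (p : Fin n → Fin n → ℝ) (hp : ∀ i h, p i h = 0 ∨ p i h = 1)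
    (α : Fin n → ℝ) (β : Fin n → Fin d → ℝ) (εp εm : Fin n → ℝ)
    (hopt : IsoCEROptimal n d x y p τ α β εp εm)
    (hpos : 0 < (∑ i, εp i) + (∑ i, εm i)) :
    τ = (∑ i, εm i) / ((∑ i, εp i) + (∑ i, εm i)) := by
  obtain ⟨⟨hy, hcon, hβ, hεp0, hεm0⟩, hmin⟩ := hopt
  obtain ⟨hτ0, hτ1⟩ := hτ
  set r : Fin n → ℝ := fun i => εp i - εm i with hrdef
  -- the perturbed points are feasible
  have feas : ∀ t : ℝ, IsoCERFeasible n d x y p (fun i => α i + t) β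
      (fun i => max (r i - t) 0) (fun i => max (t - r i) 0) := by
    intro t
    refine ⟨fun i => ?_, fun i h => ?_, hβ, fun i => le_max_right _ _, fun i => le_max_right _ _⟩
    · have h1 : max (r i - t) 0 - max (-(r i - t)) 0 = r i - t := max_sub_max' _
      have h2 : -(r i - t) = t - r i := by ring
      rw [h2] at h1
      have := hy i
      simp only [hrdef] at h1
      simp only []
      linarith
    · have h3 := hcon i h
      have e1 : p i h * ((α i + t) + ∑ j, β i j * x i j)
          = p i h * (α i + ∑ j, β i j * x i j) + p i h * t := by ring
      have e2 : p i h * ((α h + t) + ∑ j, β h j * x i j)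
          = p i h * (α h + ∑ j, β h j * x i j) + p i h * t := by ring
      simp only []
      rw [e1, e2]
      linarith
  -- objective of the perturbed point, as a single sum
  have hG : ∀ t : ℝ, IsoCERObjective n τ (fun i => max (r i - t) 0) (fun i => max (t - r i) 0)
      = ∑ i, (τ * (max (r i - t) 0)^2 + (1-τ) * (max (t - r i) 0)^2) := by
    intro t
    simp [IsoCERObjective, Finset.mul_sum, Finset.sum_add_distrib]
  have hobj : IsoCERObjective n τ εp εm = ∑ i, (τ * (εp i)^2 + (1-τ) * (εm i)^2) := by
    simp [IsoCERObjective, Finset.mul_sum, Finset.sum_add_distrib]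
  -- complementarity: max (r i) 0 = εp i and max (-(r i)) 0 = εm i
  have hmaxp : ∀ i, max (r i) 0 ≤ εp i := fun i => max_le (by simp [hrdef, hεm0 i]) (hεp0 i)
  have hmaxm : ∀ i, max (-(r i)) 0 ≤ εm i := fun i => max_le (by simp [hrdef]; linarith [hεp0 i]) (hεm0 i)
  have hterm_le : ∀ i : Fin n,
      τ * (max (r i) 0)^2 + (1-τ) * (max (-(r i)) 0)^2 ≤ τ * (εp i)^2 + (1-τ) * (εm i)^2 := by
    intro i
    have h1 : (max (r i) 0)^2 ≤ (εp i)^2 := pow_le_pow_left₀ (le_max_right _ _) (hmaxp i) 2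
    have h2 : (max (-(r i)) 0)^2 ≤ (εm i)^2 := pow_le_pow_left₀ (le_max_right _ _) (hmaxm i) 2
    have := mul_le_mul_of_nonneg_left h1 hτ0.le
    have := mul_le_mul_of_nonneg_left h2 (by linarith : (0:ℝ) ≤ 1 - τ)
    linarith
  have hG0 : IsoCERObjective n τ (fun i => max (r i - 0) 0) (fun i => max (0 - r i) 0)
      = ∑ i, (τ * (max (r i) 0)^2 + (1-τ) * (max (-(r i)) 0)^2) := by
    rw [hG 0]
    congr 1; funext i; rw [sub_zero, zero_sub]
  have hle : IsoCERObjective n τ εp εm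
      ≤ IsoCERObjective n τ (fun i => max (r i - 0) 0) (fun i => max (0 - r i) 0) :=
    hmin _ _ _ _ (feas 0)
  have hge : (∑ i, (τ * (max (r i) 0)^2 + (1-τ) * (max (-(r i)) 0)^2))
      ≤ ∑ i, (τ * (εp i)^2 + (1-τ) * (εm i)^2) :=
    Finset.sum_le_sum (fun i _ => hterm_le i)
  have heq : (∑ i, (τ * (max (r i) 0)^2 + (1-τ) * (max (-(r i)) 0)^2))
      = ∑ i, (τ * (εp i)^2 + (1-τ) * (εm i)^2) := by
    rw [hG0] at hle; rw [hobj] at hle; linarith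
  -- per-term equality
  have hterm_eq : ∀ i : Fin n,
      τ * (max (r i) 0)^2 + (1-τ) * (max (-(r i)) 0)^2 = τ * (εp i)^2 + (1-τ) * (εm i)^2 :=
    fun i => (Finset.sum_eq_sum_iff_of_le (fun i _ => hterm_le i)).1 heq i (Finset.mem_univ i)
  have hmaxp_eq : ∀ i, max (r i) 0 = εp i := by
    intro i
    have h1 : (max (r i) 0)^2 ≤ (εp i)^2 := pow_le_pow_left₀ (le_max_right _ _) (hmaxp i) 2
    have h2 : (max (-(r i)) 0)^2 ≤ (εm i)^2 := pow_le_pow_left₀ (le_max_right _ _) (hmaxm i) 2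
    have hsq : (max (r i) 0)^2 = (εp i)^2 := by nlinarith [hterm_eq i]
    nlinarith [le_max_right (r i) 0, hεp0 i, hmaxp i]
  have hmaxm_eq : ∀ i, max (-(r i)) 0 = εm i := by
    intro i
    have h1 : (max (r i) 0)^2 ≤ (εp i)^2 := pow_le_pow_left₀ (le_max_right _ _) (hmaxp i) 2
    have h2 : (max (-(r i)) 0)^2 ≤ (εm i)^2 := pow_le_pow_left₀ (le_max_right _ _) (hmaxm i) 2
    have hsq : (max (-(r i)) 0)^2 = (εm i)^2 := by
      nlinarith [hterm_eq i,
        mul_nonneg hτ0.le (by linarith : (0:ℝ) ≤ (εp i)^2 - (max (r i) 0)^2)]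
    nlinarith [le_max_right (-(r i)) 0, hεm0 i, hmaxm i]
  -- the directional-derivative quantity
  have hDsum : ∑ i, (2*τ* max (r i) 0 - 2*(1-τ) * max (-(r i)) 0)
      = 2*τ*(∑ i, εp i) - 2*(1-τ)*(∑ i, εm i) := by
    rw [Finset.sum_sub_distrib]
    congr 1
    · rw [Finset.mul_sum]; exact Finset.sum_congr rfl (fun i _ => by rw [hmaxp_eq i])
    · rw [Finset.mul_sum]; exact Finset.sum_congr rfl (fun i _ => by rw [hmaxm_eq i])
  -- n is positive
  have hn : 0 < (n:ℝ) := by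
    rcases Nat.eq_zero_or_pos n with h | h
    · subst h; simp at hpos
    · exact_mod_cast h
  -- key inequality: for all t, t * D ≤ n * t^2
  have hkey : ∀ t : ℝ, t * (2*τ*(∑ i, εp i) - 2*(1-τ)*(∑ i, εm i)) ≤ (n:ℝ) * t^2 := by
    intro t
    have h1 : IsoCERObjective n τ εp εm
        ≤ IsoCERObjective n τ (fun i => max (r i - t) 0) (fun i => max (t - r i) 0) :=
      hmin _ _ _ _ (feas t)
    have h2 : IsoCERObjective n τ (fun i => max (r i - t) 0) (fun i => max (t - r i) 0)
        ≤ ∑ i, (τ * (εp i)^2 + (1-τ) * (εm i)^2)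
          - t * (2*τ*(∑ i, εp i) - 2*(1-τ)*(∑ i, εm i)) + (n:ℝ) * t^2 := by
      rw [hG t]
      have h3 : ∀ i ∈ Finset.univ,
          τ * (max (r i - t) 0)^2 + (1-τ) * (max (t - r i) 0)^2 ≤
          (τ * (max (r i) 0)^2 + (1-τ) * (max (-(r i)) 0)^2)
            - t * (2*τ* max (r i) 0 - 2*(1-τ) * max (-(r i)) 0) + t^2 :=
        fun i _ => step_ineq τ t (r i) hτ0.le hτ1.le
      calc ∑ i, (τ * (max (r i - t) 0)^2 + (1-τ) * (max (t - r i) 0)^2)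
          ≤ ∑ i, ((τ * (max (r i) 0)^2 + (1-τ) * (max (-(r i)) 0)^2)
              - t * (2*τ* max (r i) 0 - 2*(1-τ) * max (-(r i)) 0) + t^2) :=
            Finset.sum_le_sum h3
        _ = ∑ i, (τ * (εp i)^2 + (1-τ) * (εm i)^2)
              - t * (2*τ*(∑ i, εp i) - 2*(1-τ)*(∑ i, εm i)) + (n:ℝ) * t^2 := by
            rw [Finset.sum_add_distrib, Finset.sum_sub_distrib, ← Finset.mul_sum, hDsum, heq,
              Finset.sum_const, Finset.card_univ, Fintype.card_fin, nsmul_eq_mul]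
    rw [hobj] at h1
    linarith
  -- conclude D = 0
  have hD0 : 2*τ*(∑ i, εp i) - 2*(1-τ)*(∑ i, εm i) = 0 :=
    quad_coeff_zero (n:ℝ) _ hn hkey
  -- finish
  have hsum : τ * ((∑ i, εp i) + (∑ i, εm i)) = ∑ i, εm i := by linarith [hD0]
  rw [eq_div_iff hpos.ne']
  linarith [hsum]
end

section
/- Let r_1, …, r_n ∈ ℝ and τ ∈ (0,1), and define g(c) = τ·Σ_{i=1}^n max(r_i − c, 0) + (1−τ)·Σ_{i=1}^n max(c − r_i, 0). If c = 0 minimizes g over ℝ, then the number of indices i with r_i > 0 is at most (1−τ)·n and the number of indices i with r_i < 0 is at most τ·n. -/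
/-- The intercept-shift argument underlying the quantile property of CQR: if `c = 0`
minimizes the shifted check loss
`g(c) = τ·Σ max(rᵢ − c, 0) + (1−τ)·Σ max(c − rᵢ, 0)`, then at most `(1−τ)·n` of the
`rᵢ` are strictly positive and at most `τ·n` are strictly negative. -/
theorem check_loss_zero_minimizer_counts
    (n : ℕ) (r : Fin n → ℝ) (τ : ℝ) (hτ : τ ∈ Set.Ioo (0 : ℝ) 1)
    (hmin : ∀ c : ℝ,
      τ * ∑ i, max (r i) 0 + (1 - τ) * ∑ i, max (-(r i)) 0 ≤
      τ * ∑ i, max (r i - c) 0 + (1 - τ) * ∑ i, max (c - r i) 0) :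
    ((Finset.univ.filter (fun i => 0 < r i)).card : ℝ) ≤ (1 - τ) * n ∧
    ((Finset.univ.filter (fun i => r i < 0)).card : ℝ) ≤ τ * n := by
  classical
  obtain ⟨hτ0, hτ1⟩ := hτ
  -- choose a small ε below all nonzero |r i|
  obtain ⟨ε, hε0, hε⟩ : ∃ ε > 0, ∀ i, r i ≠ 0 → ε ≤ |r i| := by
    set s := Finset.univ.filter (fun i => r i ≠ 0) with hs
    by_cases h : s.Nonempty
    · refine ⟨s.inf' h (fun i => |r i|), ?_, ?_⟩
      · rw [gt_iff_lt, Finset.lt_inf'_iff]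
        intro i hi
        simp only [hs, Finset.mem_filter] at hi
        exact abs_pos.mpr hi.2
      · intro i hi
        exact Finset.inf'_le _ (by simp [hs, hi])
    · refine ⟨1, one_pos, fun i hi => absurd ⟨i, by simp [hs, hi]⟩ h⟩
  set P := Finset.univ.filter (fun i => 0 < r i) with hP
  set N := Finset.univ.filter (fun i => r i < 0) with hN
  have hPc : (P.card : ℝ) + ((Finset.univ.filter (fun i => ¬ 0 < r i)).card : ℝ) = n := by
    rw [hP]
    norm_cast
    rw [Finset.card_filter_add_card_filter_not]
    simp
  have hNc : (N.card : ℝ) + ((Finset.univ.filter (fun i => ¬ r i < 0)).card : ℝ) = n := by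
    rw [hN]
    norm_cast
    rw [Finset.card_filter_add_card_filter_not]
    simp
  constructor
  · -- use c = ε
    have h1 : ∑ i, max (r i - ε) 0 = ∑ i, max (r i) 0 - ε * P.card := by
      have : ∀ i ∈ Finset.univ, max (r i - ε) 0
          = max (r i) 0 - (if 0 < r i then ε else 0) := by
        intro i _
        by_cases h : 0 < r i
        · have := hε i (ne_of_gt h)
          rw [abs_of_pos h] at this
          rw [max_eq_left (by linarith), max_eq_left h.le]
          simp [h]
        · push_neg at h
          rw [max_eq_right (by linarith), max_eq_right h]
          simp [not_lt.mpr h]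
      rw [Finset.sum_congr rfl this, Finset.sum_sub_distrib, Finset.sum_ite,
        Finset.sum_const, Finset.sum_const]
      simp [hP, mul_comm]
    have h2 : ∑ i, max (ε - r i) 0
        = ∑ i, max (-(r i)) 0 + ε * ((n : ℝ) - P.card) := by
      have : ∀ i ∈ Finset.univ, max (ε - r i) 0
          = max (-(r i)) 0 + (if 0 < r i then 0 else ε) := by
        intro i _
        by_cases h : 0 < r i
        · have := hε i (ne_of_gt h)
          rw [abs_of_pos h] at this
          rw [max_eq_right (by linarith), max_eq_right (by linarith)]
          simp [h]
        · push_neg at h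
          rw [max_eq_left (by linarith), max_eq_left (by linarith)]
          simp [not_lt.mpr h]
          try ring
      rw [Finset.sum_congr rfl this, Finset.sum_add_distrib, Finset.sum_ite,
        Finset.sum_const, Finset.sum_const]
      simp only [smul_eq_mul, nsmul_eq_mul, smul_zero, mul_zero, zero_mul, zero_add, add_zero]
      have : ((Finset.univ.filter (fun i => ¬ 0 < r i)).card : ℝ) = (n : ℝ) - P.card := by
        linarith
      rw [← this]; ring
    have := hmin ε
    rw [h1, h2] at this
    have hkey : τ * (ε * P.card) ≤ (1 - τ) * (ε * ((n : ℝ) - P.card)) := by nlinarith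
    nlinarith [hε0, (Nat.cast_nonneg P.card : (0:ℝ) ≤ P.card)]
  · -- use c = -ε
    have h1 : ∑ i, max (r i - (-ε)) 0 = ∑ i, max (r i) 0 + ε * ((n : ℝ) - N.card) := by
      have : ∀ i ∈ Finset.univ, max (r i - (-ε)) 0
          = max (r i) 0 + (if r i < 0 then 0 else ε) := by
        intro i _
        by_cases h : r i < 0
        · have := hε i (ne_of_lt h)
          rw [abs_of_neg h] at this
          rw [max_eq_right (by linarith), max_eq_right (by linarith)]
          simp [h]
        · push_neg at h
          rw [max_eq_left (by linarith), max_eq_left h]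
          simp [not_lt.mpr h]
          try ring
      rw [Finset.sum_congr rfl this, Finset.sum_add_distrib, Finset.sum_ite,
        Finset.sum_const, Finset.sum_const]
      simp only [smul_eq_mul, nsmul_eq_mul, smul_zero, mul_zero, zero_mul, zero_add, add_zero]
      have : ((Finset.univ.filter (fun i => ¬ r i < 0)).card : ℝ) = (n : ℝ) - N.card := by
        linarith
      rw [← this]; ring
    have h2 : ∑ i, max ((-ε) - r i) 0 = ∑ i, max (-(r i)) 0 - ε * N.card := by
      have : ∀ i ∈ Finset.univ, max ((-ε) - r i) 0
          = max (-(r i)) 0 - (if r i < 0 then ε else 0) := by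
        intro i _
        by_cases h : r i < 0
        · have := hε i (ne_of_lt h)
          rw [abs_of_neg h] at this
          rw [max_eq_left (by linarith), max_eq_left (by linarith)]
          simp [h]
          try ring
        · push_neg at h
          rw [max_eq_right (by linarith), max_eq_right (by linarith)]
          simp [not_lt.mpr h]
      rw [Finset.sum_congr rfl this, Finset.sum_sub_distrib, Finset.sum_ite,
        Finset.sum_const, Finset.sum_const]
      simp [hN, mul_comm]
    have := hmin (-ε)
    rw [h1, h2] at this
    nlinarith [hε0, (Nat.cast_nonneg N.card : (0:ℝ) ≤ N.card)]
end

section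
/- Let Y be an integrable real random variable and define, for q ∈ ℝ with E[max(q − Y, 0)] + E[max(Y − q, 0)] > 0, the level τ̃(q) = E[max(q − Y, 0)] / (E[max(q − Y, 0)] + E[max(Y − q, 0)]). Then: (i) q satisfies the expectile first-order condition at level τ̃(q), i.e., τ̃(q)·E[max(Y − q, 0)] = (1−τ̃(q))·E[max(q − Y, 0)], so q is a τ̃(q)-expectile of Y; and (ii) the map q ↦ τ̃(q) is strictly increasing wherever it is defined in the interior of the support: if q_1 < q_2 with P(Y ≤ q_1) > 0 and P(Y ≥ q_2) > 0, then τ̃(q_1) < τ̃(q_2). Consequently there is a one-to-one mapping between quantiles and expectiles of Y, under which the quantile q_τ is the τ̃(q_τ)-expectile. -/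
open MeasureTheory

/-- The expectile level associated with a point `q`:
`τ̃(q) = E[max(q − Y, 0)] / (E[max(q − Y, 0)] + E[max(Y − q, 0)])`. -/
noncomputable def tauLevel {Ω : Type*} [MeasurableSpace Ω] (μ : Measure Ω)
    (Y : Ω → ℝ) (q : ℝ) : ℝ :=
  (∫ ω, max (q - Y ω) 0 ∂μ) /
    ((∫ ω, max (q - Y ω) 0 ∂μ) + ∫ ω, max (Y ω - q) 0 ∂μ)

/-!
The expectile condition at level `τ̃(q)` is the identity `a / (a + b) * b = b / (a + b) * a`
for `a = E[(q − Y)⁺]` and `b = E[(Y − q)⁺]`. For monotonicity, moving `q` from `q₁` up to `q₂`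
raises `E[(q − Y)⁺]` by at least `(q₂ − q₁) P(Y ≤ q₁) > 0` and lowers `E[(Y − q)⁺]` by at least
`(q₂ − q₁) P(Y ≥ q₂) > 0`, and `a / (a + b)` is strictly increasing in `a` and strictly
decreasing in `b`.
-/

lemma div_add_lt_div_add {a₁ a₂ b₁ b₂ : ℝ} (ha₁ : 0 ≤ a₁) (ha : a₁ < a₂) (hb₂ : 0 ≤ b₂)
    (hb : b₂ < b₁) : a₁ / (a₁ + b₁) < a₂ / (a₂ + b₂) := by
  rw [div_lt_div_iff₀ (by linarith) (by linarith)]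
  nlinarith [mul_lt_mul_of_pos_left hb (ha₁.trans_lt ha), mul_le_mul_of_nonneg_right ha.le hb₂]

namespace MeasureTheory

variable {Ω : Type*} [MeasurableSpace Ω] {μ : Measure Ω}

lemma mul_measureReal_le_integral {f : Ω → ℝ} {s : Set Ω} {c : ℝ} (hf : Integrable f μ)
    (hf₀ : 0 ≤ᵐ[μ] f) (hs : NullMeasurableSet s μ) (hμs : μ s ≠ ⊤) (hc : ∀ ω ∈ s, c ≤ f ω) :
    c * μ.real s ≤ ∫ ω, f ω ∂μ :=
  calc c * μ.real s = ∫ _ in s, c ∂μ := by rw [setIntegral_const, smul_eq_mul, mul_comm]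
    _ ≤ ∫ ω in s, f ω ∂μ := setIntegral_mono_on₀ (integrableOn_const hμs) hf.integrableOn hs hc
    _ ≤ ∫ ω, f ω ∂μ := setIntegral_le_integral hf hf₀

variable [IsFiniteMeasure μ] {Y : Ω → ℝ}

lemma integrable_max_const_sub (hY : Integrable Y μ) (q : ℝ) :
    Integrable (fun ω ↦ max (q - Y ω) 0) μ :=
  ((integrable_const q).sub hY).pos_part

lemma integrable_max_sub_const (hY : Integrable Y μ) (q : ℝ) :
    Integrable (fun ω ↦ max (Y ω - q) 0) μ :=
  (hY.sub (integrable_const q)).pos_part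

lemma mul_measureReal_le_integral_max_const_sub_sub (hY : Integrable Y μ) {q₁ q₂ : ℝ}
    (hq : q₁ ≤ q₂) :
    (q₂ - q₁) * μ.real {ω | Y ω ≤ q₁} ≤
      (∫ ω, max (q₂ - Y ω) 0 ∂μ) - ∫ ω, max (q₁ - Y ω) 0 ∂μ := by
  rw [← integral_sub (integrable_max_const_sub hY q₂) (integrable_max_const_sub hY q₁)]
  refine mul_measureReal_le_integral
    ((integrable_max_const_sub hY q₂).sub (integrable_max_const_sub hY q₁))
    (ae_of_all _ fun ω ↦ sub_nonneg.2 (max_le_max (by linarith) le_rfl))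
    (hY.aemeasurable.nullMeasurableSet_preimage measurableSet_Iic) (measure_ne_top μ _)
    fun ω (hω : Y ω ≤ q₁) ↦ ?_
  rw [max_eq_left (by linarith), max_eq_left (by linarith)]
  linarith

lemma mul_measureReal_le_integral_max_sub_const_sub (hY : Integrable Y μ) {q₁ q₂ : ℝ}
    (hq : q₁ ≤ q₂) :
    (q₂ - q₁) * μ.real {ω | q₂ ≤ Y ω} ≤
      (∫ ω, max (Y ω - q₁) 0 ∂μ) - ∫ ω, max (Y ω - q₂) 0 ∂μ := by
  simpa [sub_eq_add_neg, add_comm] using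
    mul_measureReal_le_integral_max_const_sub_sub hY.neg (neg_le_neg hq)

end MeasureTheory

/-- (i) Any `q` with positive total deviation mass satisfies the expectile first-order
condition at level `τ̃(q)`, so `q` is a `τ̃(q)`-expectile of `Y`; and (ii) `q ↦ τ̃(q)` is
strictly increasing in the interior of the support. Consequently there is a one-to-one
mapping between quantiles and expectiles, under which the quantile `q_τ` is the
`τ̃(q_τ)`-expectile. -/
theorem quantile_expectile_one_to_one
    {Ω : Type*} [MeasurableSpace Ω] (μ : Measure Ω) [IsProbabilityMeasure μ]
    (Y : Ω → ℝ) (hY : Integrable Y μ) :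
    (∀ q : ℝ, 0 < (∫ ω, max (q - Y ω) 0 ∂μ) + ∫ ω, max (Y ω - q) 0 ∂μ →
      tauLevel μ Y q * ∫ ω, max (Y ω - q) 0 ∂μ =
        (1 - tauLevel μ Y q) * ∫ ω, max (q - Y ω) 0 ∂μ) ∧
    (∀ q₁ q₂ : ℝ, q₁ < q₂ → 0 < μ {ω | Y ω ≤ q₁} → 0 < μ {ω | q₂ ≤ Y ω} →
      tauLevel μ Y q₁ < tauLevel μ Y q₂) := by
  refine ⟨fun q hq ↦ ?_, fun q₁ q₂ hq h₁ h₂ ↦ ?_⟩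
  · unfold tauLevel
    field_simp
    ring
  · have hlower := mul_measureReal_le_integral_max_const_sub_sub hY hq.le
    have hupper := mul_measureReal_le_integral_max_sub_const_sub hY hq.le
    have hpos : ∀ s : Set Ω, 0 < μ s → 0 < (q₂ - q₁) * μ.real s := fun s hs ↦
      mul_pos (sub_pos.2 hq) (ENNReal.toReal_pos hs.ne' (measure_ne_top μ s))
    exact div_add_lt_div_add (integral_nonneg fun _ ↦ le_max_right _ _)
      (by linarith [hpos _ h₁]) (integral_nonneg fun _ ↦ le_max_right _ _)
      (by linarith [hpos _ h₂])
end

section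
/- The order-α partial frontier need not be monotone in the inputs: there exist a probability distribution of (X, Y) on ℝ₊ × ℝ₊, a quantile level τ ∈ (0,1), and points x_1 ≤ x_2 with P(X ≤ x_1) > 0 such that q_τ(x_1) > q_τ(x_2). -/
open MeasureTheory

noncomputable def myμ : Measure (ℝ × ℝ) :=
  (2:ENNReal)⁻¹ • (Measure.dirac ((0:ℝ),(1:ℝ)) + Measure.dirac ((1:ℝ),(0:ℝ)))

lemma meas1 (c : ℝ) : MeasurableSet {p : ℝ × ℝ | p.1 ≤ c} :=
  measurableSet_le measurable_fst measurable_const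

lemma meas2 (y c : ℝ) : MeasurableSet {p : ℝ × ℝ | p.2 ≤ y ∧ p.1 ≤ c} :=
  (measurableSet_le measurable_snd measurable_const).inter
    (measurableSet_le measurable_fst measurable_const)

lemma myμ_apply {s : Set (ℝ × ℝ)} (hs : MeasurableSet s) :
    myμ s = 2⁻¹ * (s.indicator 1 ((0:ℝ),(1:ℝ)) + s.indicator 1 ((1:ℝ),(0:ℝ))) := by
  simp [myμ, Measure.dirac_apply' _ hs, mul_add]

/-- The order-α partial frontier need not be monotone in the inputs: there exist a
probability distribution of `(X, Y)` supported on `ℝ₊ × ℝ₊`, a level `τ ∈ (0,1)`, and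
points `x₁ ≤ x₂` with `P(X ≤ x₁) > 0` such that `q_τ(x₁) > q_τ(x₂)`, where
`q_τ(x) = inf{ y ≥ 0 : P(Y ≤ y, X ≤ x) / P(X ≤ x) ≥ τ }`. -/
theorem order_alpha_frontier_not_monotone :
    ∃ μ : Measure (ℝ × ℝ), IsProbabilityMeasure μ ∧
      μ {p : ℝ × ℝ | 0 ≤ p.1 ∧ 0 ≤ p.2} = 1 ∧
      ∃ τ ∈ Set.Ioo (0 : ℝ) 1, ∃ x₁ x₂ : ℝ, x₁ ≤ x₂ ∧
        0 < μ {p : ℝ × ℝ | p.1 ≤ x₁} ∧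
        sInf {y : ℝ | 0 ≤ y ∧
            τ ≤ (μ {p : ℝ × ℝ | p.2 ≤ y ∧ p.1 ≤ x₂}).toReal /
                (μ {p : ℝ × ℝ | p.1 ≤ x₂}).toReal} <
        sInf {y : ℝ | 0 ≤ y ∧
            τ ≤ (μ {p : ℝ × ℝ | p.2 ≤ y ∧ p.1 ≤ x₁}).toReal /
                (μ {p : ℝ × ℝ | p.1 ≤ x₁}).toReal} := by
  refine ⟨myμ, ?_, ?_, 1/2, ⟨by norm_num, by norm_num⟩, 0, 1, by norm_num, ?_, ?_⟩
  · constructor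
    rw [myμ_apply MeasurableSet.univ]
    simp [Set.indicator]
    norm_num [ENNReal.inv_mul_cancel]
  · rw [myμ_apply (show MeasurableSet {p : ℝ × ℝ | 0 ≤ p.1 ∧ 0 ≤ p.2} from
      (measurableSet_le measurable_const measurable_fst).inter
      (measurableSet_le measurable_const measurable_snd))]
    norm_num [Set.indicator, one_add_one_eq_two]
    rw [ENNReal.inv_mul_cancel] <;> norm_num
  · rw [myμ_apply (meas1 0)]
    norm_num [Set.indicator]
  · have h1 : myμ {p : ℝ × ℝ | p.1 ≤ (1:ℝ)} = 1 := by
      rw [myμ_apply (meas1 1)]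
      norm_num [Set.indicator]
      rw [ENNReal.inv_mul_cancel] <;> norm_num
    have h0 : myμ {p : ℝ × ℝ | p.1 ≤ (0:ℝ)} = 2⁻¹ := by
      rw [myμ_apply (meas1 0)]
      norm_num [Set.indicator]
    have hA : {y : ℝ | 0 ≤ y ∧ (1:ℝ)/2 ≤ (myμ {p : ℝ × ℝ | p.2 ≤ y ∧ p.1 ≤ (1:ℝ)}).toReal /
        (myμ {p : ℝ × ℝ | p.1 ≤ (1:ℝ)}).toReal} = Set.Ici 0 := by
      ext y
      simp only [Set.mem_setOf_eq, Set.mem_Ici, h1, ENNReal.toReal_one, div_one]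
      constructor
      · exact fun h => h.1
      · intro hy
        refine ⟨hy, ?_⟩
        have : myμ {p : ℝ × ℝ | p.2 ≤ y ∧ p.1 ≤ (1:ℝ)} =
            2⁻¹ * (({p : ℝ × ℝ | p.2 ≤ y ∧ p.1 ≤ (1:ℝ)}).indicator 1 ((0:ℝ),(1:ℝ)) + 1) := by
          rw [myμ_apply (meas2 y 1)]
          norm_num [Set.indicator, hy]
        rcases le_or_gt 1 y with h | h
        · have e : myμ {p : ℝ × ℝ | p.2 ≤ y ∧ p.1 ≤ (1:ℝ)} = 1 := by
            rw [this]
            simp only [Set.indicator, Set.mem_setOf_eq]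
            rw [if_pos ⟨h, le_of_lt one_pos⟩]
            rw [Pi.one_apply, one_add_one_eq_two, ENNReal.inv_mul_cancel] <;> norm_num
          rw [e]
          norm_num
        · have e : myμ {p : ℝ × ℝ | p.2 ≤ y ∧ p.1 ≤ (1:ℝ)} = 2⁻¹ := by
            rw [this]
            simp only [Set.indicator, Set.mem_setOf_eq]
            rw [if_neg (by simp [not_le.mpr h])]
            norm_num
          rw [e]
          norm_num
    have hB : {y : ℝ | 0 ≤ y ∧ (1:ℝ)/2 ≤ (myμ {p : ℝ × ℝ | p.2 ≤ y ∧ p.1 ≤ (0:ℝ)}).toReal /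
        (myμ {p : ℝ × ℝ | p.1 ≤ (0:ℝ)}).toReal} = Set.Ici 1 := by
      ext y
      simp only [Set.mem_setOf_eq, Set.mem_Ici, h0]
      have hinv : ((2:ENNReal)⁻¹).toReal = 2⁻¹ := by
        simp
      constructor
      · rintro ⟨hy, hle⟩
        by_contra h
        push_neg at h
        have : myμ {p : ℝ × ℝ | p.2 ≤ y ∧ p.1 ≤ (0:ℝ)} = 0 := by
          rw [myμ_apply (meas2 y 0)]
          simp [Set.indicator, not_le.mpr h]
        rw [this] at hle
        norm_num [hinv] at hle
      · intro hy
        refine ⟨by linarith, ?_⟩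
        have : myμ {p : ℝ × ℝ | p.2 ≤ y ∧ p.1 ≤ (0:ℝ)} = 2⁻¹ := by
          rw [myμ_apply (meas2 y 0)]
          norm_num [Set.indicator, hy, le_trans zero_le_one hy]
        rw [this, hinv]
        norm_num
    rw [hA, hB, csInf_Ici, csInf_Ici]
    norm_num
end
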